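/- arXiv:2501.02089 — 3 statements merged into one kernel-verified Lean document; each statement's English description precedes it below -/
import Mathlib

section
/- Let η ∈ (0,1), let H be a positive integer, let F be a random variable with the binomial distribution Binomial(H, η), and set C = (1−η)/η and A_η = (η³ + (1−η)³)/(η(1−η)). Then Var[C^{2F−H}] = A_η^H − 1. -/
lemma zpow_key (a b : ℝ) (ha : a ≠ 0) (hb : b ≠ 0) {k H : ℕ} (hk : k ≤ H) :
    (b / a) ^ (2 * (k : ℤ) - (H : ℤ)) = (b / a) ^ k * (a / b) ^ (H - k) := by
  have hcast : 2 * (k : ℤ) - (H : ℤ) = (k : ℤ) - ((H - k : ℕ) : ℤ) := by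
    omega
  rw [hcast, zpow_sub₀ (div_ne_zero hb ha), zpow_natCast, zpow_natCast,
    div_eq_mul_inv ((b / a) ^ k), ← inv_pow, inv_div]

/-- Let `η ∈ (0,1)`, `H ≥ 1`, let `F ~ Binomial(H, η)`, and set
`C = (1-η)/η` and `A_η = (η³ + (1-η)³)/(η(1-η))`.  Then
`Var[C^(2F-H)] = A_η^H - 1`, where the variance `E[X²] - (E[X])²` is written with
expectations as finite sums over `k = 0,…,H` weighted by the binomial probability
`C(H,k) η^k (1-η)^(H-k)`. -/
theorem binomial_importance_ratio_variance (η : ℝ) (hη : η ∈ Set.Ioo (0 : ℝ) 1)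
    (H : ℕ) (hH : 1 ≤ H) :
    (∑ k ∈ Finset.range (H + 1),
        (H.choose k : ℝ) * η ^ k * (1 - η) ^ (H - k) *
          (((1 - η) / η) ^ (2 * (k : ℤ) - (H : ℤ))) ^ 2)
      - (∑ k ∈ Finset.range (H + 1),
          (H.choose k : ℝ) * η ^ k * (1 - η) ^ (H - k) *
            ((1 - η) / η) ^ (2 * (k : ℤ) - (H : ℤ))) ^ 2
      = ((η ^ 3 + (1 - η) ^ 3) / (η * (1 - η))) ^ H - 1 := by
  obtain ⟨h0, h1⟩ := hη
  have ha : η ≠ 0 := ne_of_gt h0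
  have hb : (1 - η) ≠ 0 := ne_of_gt (by linarith)
  have S1 : (∑ k ∈ Finset.range (H + 1),
      (H.choose k : ℝ) * η ^ k * (1 - η) ^ (H - k) *
        ((1 - η) / η) ^ (2 * (k : ℤ) - (H : ℤ))) = 1 := by
    have hsum : ∀ k ∈ Finset.range (H + 1),
        (H.choose k : ℝ) * η ^ k * (1 - η) ^ (H - k) *
          ((1 - η) / η) ^ (2 * (k : ℤ) - (H : ℤ))
        = (1 - η) ^ k * η ^ (H - k) * (H.choose k : ℝ) := by
      intro k hk
      have hk' : k ≤ H := Nat.lt_succ_iff.mp (Finset.mem_range.mp hk)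
      rw [zpow_key η (1 - η) ha hb hk', div_pow, div_pow]
      field_simp
    rw [Finset.sum_congr rfl hsum, ← add_pow]
    norm_num
  have S2 : (∑ k ∈ Finset.range (H + 1),
      (H.choose k : ℝ) * η ^ k * (1 - η) ^ (H - k) *
        (((1 - η) / η) ^ (2 * (k : ℤ) - (H : ℤ))) ^ 2)
      = ((η ^ 3 + (1 - η) ^ 3) / (η * (1 - η))) ^ H := by
    have hsum : ∀ k ∈ Finset.range (H + 1),
        (H.choose k : ℝ) * η ^ k * (1 - η) ^ (H - k) *
          (((1 - η) / η) ^ (2 * (k : ℤ) - (H : ℤ))) ^ 2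
        = ((1 - η) ^ 2 / η) ^ k * (η ^ 2 / (1 - η)) ^ (H - k) * (H.choose k : ℝ) := by
      intro k hk
      have hk' : k ≤ H := Nat.lt_succ_iff.mp (Finset.mem_range.mp hk)
      have e1 : ((1 - η) ^ 2 / η) ^ k = (1 - η) ^ (2 * k) / η ^ k := by
        rw [div_pow, pow_mul]
      have e2 : (η ^ 2 / (1 - η)) ^ (H - k) = η ^ (2 * (H - k)) / (1 - η) ^ (H - k) := by
        rw [div_pow, pow_mul]
      rw [zpow_key η (1 - η) ha hb hk', e1, e2]
      simp only [mul_pow, div_pow, ← pow_mul]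
      field_simp
      ring
    rw [Finset.sum_congr rfl hsum, ← add_pow]
    congr 1
    field_simp
    ring
  rw [S1, S2]
  norm_num
end

section
/- For any policy π in a finite-horizon tabular MDP with rewards in [0,1], the variance of the Monte Carlo return is at least the semiparametric efficiency term: Var_π[Σ_{t=1}^H r_t] ≥ Σ_{t=1}^H E_π[ Var[ V^π_{t+1}(s_{t+1}) + r_t | s_t, a_t ] ]. -/
open Finset MeasureTheory

section MDPDefs

variable {S A : Type} [Fintype S] [Fintype A]

/-- `π` is a (time-inhomogeneous, Markov) policy: `π t s a = π_t(a|s)`. -/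
def IsPolicy (π : ℕ → S → A → ℝ) : Prop :=
  (∀ t s a, 0 ≤ π t s a) ∧ ∀ t s, ∑ a : A, π t s a = 1

/-- `P` is a transition kernel: `P t s a s' = P_t(s'|s,a)`. -/
def IsKernel (P : ℕ → S → A → S → ℝ) : Prop :=
  (∀ t s a s', 0 ≤ P t s a s') ∧ ∀ t s a, ∑ s' : S, P t s a s' = 1

/-- `d` is a probability distribution on states. -/
def IsDist (d : S → ℝ) : Prop := (∀ s, 0 ≤ d s) ∧ ∑ s : S, d s = 1

/-- Value function `V^π_t` (time `t` is 0-indexed, horizon `H`, `V^π_t = 0` for `t ≥ H`):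
`V^π_t(s) = Σ_a π_t(a|s) (r_t(s,a) + Σ_{s'} P_t(s'|s,a) V^π_{t+1}(s'))`. -/
noncomputable def valueV (H : ℕ) (P : ℕ → S → A → S → ℝ) (r : ℕ → S → A → ℝ)
    (π : ℕ → S → A → ℝ) (t : ℕ) : S → ℝ :=
  if _h : t < H then
    fun s => ∑ a : A, π t s a * (r t s a + ∑ s' : S, P t s a s' * valueV H P r π (t + 1) s')
  else fun _ => 0
termination_by H - t
decreasing_by omega

/-- Q function `Q^π_t(s,a) = r_t(s,a) + Σ_{s'} P_t(s'|s,a) V^π_{t+1}(s')`. -/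
noncomputable def qval (H : ℕ) (P : ℕ → S → A → S → ℝ) (r : ℕ → S → A → ℝ)
    (π : ℕ → S → A → ℝ) (t : ℕ) (s : S) (a : A) : ℝ :=
  r t s a + ∑ s' : S, P t s a s' * valueV H P r π (t + 1) s'

/-- The value of a policy: `v^π = Σ_s d₁(s) V^π_1(s)`. -/
noncomputable def vval (H : ℕ) (P : ℕ → S → A → S → ℝ) (r : ℕ → S → A → ℝ)
    (π : ℕ → S → A → ℝ) (d1 : S → ℝ) : ℝ :=
  ∑ s : S, d1 s * valueV H P r π 0 s

/-- Marginal state occupancy `d^π_t(s)` (time 0-indexed). -/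
noncomputable def occS (P : ℕ → S → A → S → ℝ) (π : ℕ → S → A → ℝ) (d1 : S → ℝ) :
    ℕ → S → ℝ
  | 0 => d1
  | t + 1 => fun s' => ∑ s : S, ∑ a : A, occS P π d1 t s * π t s a * P t s a s'

/-- Marginal state-action occupancy `d^π_t(s,a) = d^π_t(s) π_t(a|s)`. -/
noncomputable def occSA (P : ℕ → S → A → S → ℝ) (π : ℕ → S → A → ℝ) (d1 : S → ℝ)
    (t : ℕ) (s : S) (a : A) : ℝ :=
  occS P π d1 t s * π t s a

end MDPDefs
section RewardDefs

variable {S A : Type} [Fintype S] [Fintype A]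

/-- `R` is a family of reward distributions supported on `[0,1]`. -/
def IsRewardDist (R : ℕ → S → A → MeasureTheory.Measure ℝ) : Prop :=
  ∀ t (s : S) (a : A),
    MeasureTheory.IsProbabilityMeasure (R t s a) ∧ R t s a ((Set.Icc (0 : ℝ) 1)ᶜ) = 0

/-- The mean reward `r̄_t(s,a)` of the reward distribution `R_t(·|s,a)`. -/
noncomputable def rbar (R : ℕ → S → A → MeasureTheory.Measure ℝ) (t : ℕ) (s : S) (a : A) : ℝ :=
  ∫ x, x ∂(R t s a)

/-- The conditional variance `Var[r_t + V^π_{t+1}(s_{t+1}) | s_t = s, a_t = a]`,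
where `s_{t+1} ~ P_t(·|s,a)` and `r_t ~ R_t(·|s,a)` are independent. -/
noncomputable def condVar (H : ℕ) (P : ℕ → S → A → S → ℝ)
    (R : ℕ → S → A → MeasureTheory.Measure ℝ)
    (π : ℕ → S → A → ℝ) (t : ℕ) (s : S) (a : A) : ℝ :=
  (∑ s' : S, P t s a s' * ∫ x, (valueV H P (rbar R) π (t + 1) s' + x) ^ 2 ∂(R t s a))
    - qval H P (rbar R) π t s a ^ 2

end RewardDefs
section TrajDefs

variable {S A : Type} [Fintype S] [Fintype A]

/-- The probability that policy `π` traces the state-action path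
`p = ((s₁,a₁),…,(s_H,a_H))` in the MDP `(P, d₁)`. -/
noncomputable def trajWeight (H : ℕ) (hH : 0 < H) (P : ℕ → S → A → S → ℝ)
    (π : ℕ → S → A → ℝ) (d1 : S → ℝ) (p : Fin H → S × A) : ℝ :=
  d1 (p ⟨0, hH⟩).1 *
    ∏ h : Fin H, (π h (p h).1 (p h).2 *
      if h' : (h : ℕ) + 1 < H then P h (p h).1 (p h).2 (p ⟨(h : ℕ) + 1, h'⟩).1 else 1)

/-- The law of the random trajectory `((s₁,a₁),r₁),…,((s_H,a_H),r_H)` obtained by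
running policy `π` in the MDP `(P, R, d₁)`: a mixture, over discrete state-action
paths `p`, of product measures in which the rewards are conditionally independent
with `r_h ~ R_h(·|s_h,a_h)`. -/
noncomputable def trajMeasure [MeasurableSpace S] [MeasurableSpace A]
    (H : ℕ) (hH : 0 < H) (P : ℕ → S → A → S → ℝ)
    (R : ℕ → S → A → MeasureTheory.Measure ℝ)
    (π : ℕ → S → A → ℝ) (d1 : S → ℝ) : MeasureTheory.Measure (Fin H → (S × A) × ℝ) :=
  ∑ p : Fin H → S × A, ENNReal.ofReal (trajWeight H hH P π d1 p) •
    MeasureTheory.Measure.pi fun h =>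
      (MeasureTheory.Measure.dirac (p h)).prod (R h (p h).1 (p h).2)

end TrajDefs

/-! Conditionally on the state–action path, the rewards are independent, so the second moment
of the return is the second moment of the mean-reward return `Σ_h r̄_h(s_h, a_h)` plus the
expected sum of the reward variances, and its mean is `Σ_s d₁(s) V_1(s)`. Splitting the
conditional variance in the efficiency term into the reward variance plus the variance of
`V_{t+1}(s_{t+1})` under `P_t(·|s_t,a_t)`, the reward variances cancel, and what is left is a
lower bound for the variance of the mean-reward return over paths. That bound is proved by
induction on the horizon, peeling off the first step of the path: the only inequality used is
Jensen's `V_t(s)² ≤ Σ_a π_t(a|s) Q_t(s,a)²` (the action noise is dropped), together with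
`(Σ_s d₁(s) V_1(s))² ≤ Σ_s d₁(s) V_1(s)²` at the start. -/

def timeShift {α : Type*} (f : ℕ → α) : ℕ → α := fun t => f (t + 1)

@[simp] lemma timeShift_apply {α : Type*} (f : ℕ → α) (t : ℕ) : timeShift f t = f (t + 1) := rfl

lemma sum_pi_fin_succ_eq_sum_cons {α M : Type*} [Fintype α] [AddCommMonoid M] {n : ℕ}
    (f : (Fin (n + 1) → α) → M) :
    ∑ p, f p = ∑ x, ∑ q : Fin n → α, f (Fin.cons x q) := by
  rw [← (Fin.consEquiv fun _ => α).sum_comp, Fintype.sum_prod_type]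
  rfl

lemma sq_sum_le_sum_mul_sq {ι : Type*} (s : Finset ι) {w : ι → ℝ} (hw₀ : ∀ i ∈ s, 0 ≤ w i)
    (hw₁ : ∑ i ∈ s, w i = 1) (f : ι → ℝ) : (∑ i ∈ s, w i * f i) ^ 2 ≤ ∑ i ∈ s, w i * f i ^ 2 := by
  simpa only [smul_eq_mul] using
    (even_two.convexOn_pow (𝕜 := ℝ)).map_sum_le hw₀ hw₁ fun _ _ => Set.mem_univ _

section Kernels

variable {S A : Type}

lemma IsKernel.timeShift [Fintype S] {P : ℕ → S → A → S → ℝ} (hP : IsKernel P) :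
    IsKernel (timeShift P) :=
  ⟨fun t => hP.1 (t + 1), fun t => hP.2 (t + 1)⟩

lemma IsKernel.isDist [Fintype S] {P : ℕ → S → A → S → ℝ} (hP : IsKernel P) (t : ℕ) (s : S)
    (a : A) : IsDist (P t s a) :=
  ⟨hP.1 t s a, hP.2 t s a⟩

lemma IsPolicy.timeShift [Fintype A] {π : ℕ → S → A → ℝ} (hπ : IsPolicy π) :
    IsPolicy (timeShift π) :=
  ⟨fun t => hπ.1 (t + 1), fun t => hπ.2 (t + 1)⟩

end Kernels

section Paths

variable {S A : Type}

def pathSum {H : ℕ} (f : ℕ → S → A → ℝ) (p : Fin H → S × A) : ℝ :=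
  ∑ h : Fin H, f h (p h).1 (p h).2

@[simp] lemma pathSum_cons {H : ℕ} (f : ℕ → S → A → ℝ) (x : S × A) (q : Fin H → S × A) :
    pathSum f (Fin.cons x q : Fin (H + 1) → S × A) = f 0 x.1 x.2 + pathSum (timeShift f) q := by
  simp [pathSum, Fin.sum_univ_succ]

/-- Unlike `trajWeight`, this is defined for every horizon, by peeling off the first step: the
rest of the path is weighted in the time-shifted MDP started from `P_0(·|s₀,a₀)`. -/
noncomputable def pathWeight : (H : ℕ) → (ℕ → S → A → S → ℝ) → (ℕ → S → A → ℝ) → (S → ℝ) →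
    (Fin H → S × A) → ℝ
  | 0, _, _, _, _ => 1
  | H + 1, P, π, d, p => d (p 0).1 * π 0 (p 0).1 (p 0).2 *
      pathWeight H (timeShift P) (timeShift π) (P 0 (p 0).1 (p 0).2) (Fin.tail p)

@[simp] lemma pathWeight_cons (H : ℕ) (P : ℕ → S → A → S → ℝ) (π : ℕ → S → A → ℝ) (d : S → ℝ)
    (x : S × A) (q : Fin H → S × A) :
    pathWeight (H + 1) P π d (Fin.cons x q)
      = d x.1 * π 0 x.1 x.2 * pathWeight H (timeShift P) (timeShift π) (P 0 x.1 x.2) q := by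
  simp [pathWeight, Fin.tail_cons]

variable [Fintype S] [Fintype A]

lemma sum_pathWeight_mul_eq_sum_cons (H : ℕ) (P : ℕ → S → A → S → ℝ) (π : ℕ → S → A → ℝ)
    (d : S → ℝ) (f : (Fin (H + 1) → S × A) → ℝ) :
    ∑ p, pathWeight (H + 1) P π d p * f p
      = ∑ x : S × A, d x.1 * π 0 x.1 x.2 *
          ∑ q, pathWeight H (timeShift P) (timeShift π) (P 0 x.1 x.2) q * f (Fin.cons x q) := by
  simp only [sum_pi_fin_succ_eq_sum_cons, pathWeight_cons, Finset.mul_sum, mul_assoc]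

lemma sum_pathWeight {P : ℕ → S → A → S → ℝ} {π : ℕ → S → A → ℝ} (hP : IsKernel P)
    (hπ : IsPolicy π) (H : ℕ) {d : S → ℝ} (hd : IsDist d) : ∑ p, pathWeight H P π d p = 1 := by
  induction H generalizing P π d with
  | zero => simp [pathWeight]
  | succ H ih =>
    simpa [sum_pi_fin_succ_eq_sum_cons, ← Finset.mul_sum, Fintype.sum_prod_type, hπ.2 0,
      ih hP.timeShift hπ.timeShift (hP.isDist 0 _ _)] using hd.2

end Paths

section Value

variable {S A : Type} [Fintype S] [Fintype A] {H : ℕ} {P : ℕ → S → A → S → ℝ}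
  {r π : ℕ → S → A → ℝ}

lemma valueV_of_lt {t : ℕ} (ht : t < H) (s : S) :
    valueV H P r π t s = ∑ a, π t s a * qval H P r π t s a := by
  rw [valueV, dif_pos ht]
  rfl

lemma valueV_of_le {t : ℕ} (ht : H ≤ t) (s : S) : valueV H P r π t s = 0 := by
  rw [valueV, dif_neg (by omega)]

lemma valueV_timeShift (t : ℕ) (s : S) :
    valueV H (timeShift P) (timeShift r) (timeShift π) t s = valueV (H + 1) P r π (t + 1) s := by
  by_cases ht : t < H
  · rw [valueV_of_lt ht, valueV_of_lt (by omega)]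
    simp only [qval, timeShift_apply, valueV_timeShift (t + 1)]
  · rw [valueV_of_le (by omega), valueV_of_le (by omega)]
termination_by H - t

lemma sum_pathWeight_mul_pathSum_eq_sum_valueV (hP : IsKernel P) (hπ : IsPolicy π) (H : ℕ)
    (r : ℕ → S → A → ℝ) {d : S → ℝ} (hd : IsDist d) :
    ∑ p, pathWeight H P π d p * pathSum r p = ∑ s, d s * valueV H P r π 0 s := by
  induction H generalizing P r π d with
  | zero => simp [pathSum, valueV_of_le]
  | succ H ih =>
    have hcons (x : S × A) :
        ∑ q, pathWeight H (timeShift P) (timeShift π) (P 0 x.1 x.2) q *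
            pathSum r (Fin.cons x q : Fin (H + 1) → S × A)
          = qval (H + 1) P r π 0 x.1 x.2 := by
      have hx := hP.isDist 0 x.1 x.2
      simp only [pathSum_cons, mul_add, Finset.sum_add_distrib, ← Finset.sum_mul,
        sum_pathWeight hP.timeShift hπ.timeShift H hx, one_mul,
        ih hP.timeShift hπ.timeShift (timeShift r) hx, valueV_timeShift, qval]
    rw [sum_pathWeight_mul_eq_sum_cons, Finset.sum_congr rfl fun x _ => congrArg _ (hcons x)]
    simp only [Fintype.sum_prod_type, valueV_of_lt (Nat.succ_pos H), Finset.mul_sum, mul_assoc]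

end Value

section Occupancy

variable {S A : Type} [Fintype S] [Fintype A]

lemma occS_succ (P : ℕ → S → A → S → ℝ) (π : ℕ → S → A → ℝ) (d : S → ℝ) (t : ℕ) (s : S) :
    occS P π d (t + 1) s
      = ∑ x : S × A, d x.1 * π 0 x.1 x.2 * occS (timeShift P) (timeShift π) (P 0 x.1 x.2) t s := by
  induction t generalizing s with
  | zero => simp [occS, Fintype.sum_prod_type]
  | succ t ih =>
    rw [occS.eq_2 _ _ _ (t + 1)]
    simp only [occS.eq_2 _ _ _ t, ih, Finset.sum_mul, Finset.mul_sum]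
    conv_lhs => enter [2, s₁]; rw [Finset.sum_comm]
    rw [Finset.sum_comm]
    refine Finset.sum_congr rfl fun x _ => Finset.sum_congr rfl fun s₁ _ =>
      Finset.sum_congr rfl fun a₁ _ => ?_
    simp only [timeShift_apply]
    ring

lemma sum_occSA_succ_mul (P : ℕ → S → A → S → ℝ) (π : ℕ → S → A → ℝ) (d : S → ℝ) (t : ℕ)
    (g : S → A → ℝ) :
    ∑ s, ∑ a, occSA P π d (t + 1) s a * g s a
      = ∑ x : S × A, d x.1 * π 0 x.1 x.2 *
          ∑ s, ∑ a, occSA (timeShift P) (timeShift π) (P 0 x.1 x.2) t s a * g s a := by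
  simp only [occSA, occS_succ, Finset.sum_mul, Finset.mul_sum]
  conv_lhs => enter [2, s]; rw [Finset.sum_comm]
  rw [Finset.sum_comm]
  refine Finset.sum_congr rfl fun x _ => Finset.sum_congr rfl fun s _ =>
    Finset.sum_congr rfl fun a _ => ?_
  simp only [timeShift_apply]
  ring

lemma sum_pathWeight_mul_pathSum_eq_sum_occSA {P : ℕ → S → A → S → ℝ} {π : ℕ → S → A → ℝ}
    (hP : IsKernel P) (hπ : IsPolicy π) (H : ℕ) {d : S → ℝ} (hd : IsDist d)
    (f : ℕ → S → A → ℝ) :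
    ∑ p, pathWeight H P π d p * pathSum f p
      = ∑ t ∈ Finset.range H, ∑ s, ∑ a, occSA P π d t s a * f t s a := by
  induction H generalizing P π d f with
  | zero => simp [pathSum]
  | succ H ih =>
    have hcons (x : S × A) :
        ∑ q, pathWeight H (timeShift P) (timeShift π) (P 0 x.1 x.2) q *
            pathSum f (Fin.cons x q : Fin (H + 1) → S × A)
          = f 0 x.1 x.2 + ∑ t ∈ Finset.range H, ∑ s, ∑ a,
              occSA (timeShift P) (timeShift π) (P 0 x.1 x.2) t s a * f (t + 1) s a := by
      have hx := hP.isDist 0 x.1 x.2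
      simp only [pathSum_cons, mul_add, Finset.sum_add_distrib, ← Finset.sum_mul,
        sum_pathWeight hP.timeShift hπ.timeShift H hx, one_mul,
        ih hP.timeShift hπ.timeShift hx, timeShift_apply]
    rw [sum_pathWeight_mul_eq_sum_cons, Finset.sum_congr rfl fun x _ => congrArg _ (hcons x),
      Finset.sum_range_succ', Finset.sum_congr rfl fun t _ => sum_occSA_succ_mul P π d t _,
      Finset.sum_comm]
    simp only [mul_add, Finset.sum_add_distrib, Finset.mul_sum, Fintype.sum_prod_type, occSA, occS]
    ring

end Occupancy

section SecondMoment

variable {S A : Type} [Fintype S] [Fintype A]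

noncomputable def nextValueVar (H : ℕ) (P : ℕ → S → A → S → ℝ) (r π : ℕ → S → A → ℝ) (t : ℕ)
    (s : S) (a : A) : ℝ :=
  ∑ s', P t s a s' * valueV H P r π (t + 1) s' ^ 2
    - (∑ s', P t s a s' * valueV H P r π (t + 1) s') ^ 2

lemma timeShift_nextValueVar (H : ℕ) (P : ℕ → S → A → S → ℝ) (r π : ℕ → S → A → ℝ) :
    timeShift (nextValueVar (H + 1) P r π)
      = nextValueVar H (timeShift P) (timeShift r) (timeShift π) := by
  funext t s a
  simp only [nextValueVar, valueV_timeShift, timeShift_apply]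

lemma valueV_sq_le_sum_mul_qval_sq {H : ℕ} {P : ℕ → S → A → S → ℝ} {r π : ℕ → S → A → ℝ}
    (hπ : IsPolicy π) {t : ℕ} (ht : t < H) (s : S) :
    valueV H P r π t s ^ 2 ≤ ∑ a, π t s a * qval H P r π t s a ^ 2 := by
  rw [valueV_of_lt ht]
  exact sq_sum_le_sum_mul_sq _ (fun a _ => hπ.1 t s a) (hπ.2 t s) _

lemma sum_valueV_sq_add_sum_pathWeight_mul_nextValueVar_le {P : ℕ → S → A → S → ℝ}
    {π : ℕ → S → A → ℝ} (hP : IsKernel P) (hπ : IsPolicy π) (H : ℕ) (r : ℕ → S → A → ℝ)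
    {d : S → ℝ} (hd : IsDist d) :
    ∑ s, d s * valueV H P r π 0 s ^ 2
        + ∑ p, pathWeight H P π d p * pathSum (nextValueVar H P r π) p
      ≤ ∑ p, pathWeight H P π d p * pathSum r p ^ 2 := by
  induction H generalizing P r π d with
  | zero => simp [pathSum, valueV_of_le]
  | succ H ih =>
    have hstep (x : S × A) :
        qval (H + 1) P r π 0 x.1 x.2 ^ 2
            + ∑ q, pathWeight H (timeShift P) (timeShift π) (P 0 x.1 x.2) q *
              pathSum (nextValueVar (H + 1) P r π) (Fin.cons x q : Fin (H + 1) → S × A)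
          ≤ ∑ q, pathWeight H (timeShift P) (timeShift π) (P 0 x.1 x.2) q *
              pathSum r (Fin.cons x q : Fin (H + 1) → S × A) ^ 2 := by
      have hx := hP.isDist 0 x.1 x.2
      have hW := sum_pathWeight hP.timeShift hπ.timeShift H hx
      have hmean := sum_pathWeight_mul_pathSum_eq_sum_valueV hP.timeShift hπ.timeShift H
        (timeShift r) hx
      have hvar := ih hP.timeShift hπ.timeShift (timeShift r) hx
      set W := pathWeight H (timeShift P) (timeShift π) (P 0 x.1 x.2)
      have hsq (q : Fin H → S × A) : W q * (r 0 x.1 x.2 + pathSum (timeShift r) q) ^ 2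
          = r 0 x.1 x.2 ^ 2 * W q + 2 * r 0 x.1 x.2 * (W q * pathSum (timeShift r) q)
            + W q * pathSum (timeShift r) q ^ 2 := by
        ring
      simp only [pathSum_cons, timeShift_nextValueVar, hsq, mul_add, Finset.sum_add_distrib,
        ← Finset.mul_sum, ← Finset.sum_mul, hW, hmean]
      simp only [valueV_timeShift] at hmean hvar ⊢
      unfold qval nextValueVar at *
      linarith
    have hjensen : ∑ s, d s * valueV (H + 1) P r π 0 s ^ 2
        ≤ ∑ x : S × A, d x.1 * π 0 x.1 x.2 * qval (H + 1) P r π 0 x.1 x.2 ^ 2 := by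
      rw [Fintype.sum_prod_type]
      refine Finset.sum_le_sum fun s _ => ?_
      simpa only [mul_assoc, ← Finset.mul_sum] using
        mul_le_mul_of_nonneg_left (valueV_sq_le_sum_mul_qval_sq hπ (Nat.succ_pos H) s) (hd.1 s)
    rw [sum_pathWeight_mul_eq_sum_cons, sum_pathWeight_mul_eq_sum_cons]
    refine (add_le_add_left hjensen _).trans ?_
    rw [← Finset.sum_add_distrib]
    refine Finset.sum_le_sum fun x _ => ?_
    rw [← mul_add]
    exact mul_le_mul_of_nonneg_left (hstep x) (mul_nonneg (hd.1 _) (hπ.1 _ _ _))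

lemma sum_occSA_mul_nextValueVar_le {P : ℕ → S → A → S → ℝ} {π : ℕ → S → A → ℝ}
    (hP : IsKernel P) (hπ : IsPolicy π) (H : ℕ) (r : ℕ → S → A → ℝ) {d : S → ℝ}
    (hd : IsDist d) :
    ∑ t ∈ Finset.range H, ∑ s, ∑ a, occSA P π d t s a * nextValueVar H P r π t s a
      ≤ ∑ p, pathWeight H P π d p * pathSum r p ^ 2
          - (∑ p, pathWeight H P π d p * pathSum r p) ^ 2 := by
  rw [← sum_pathWeight_mul_pathSum_eq_sum_occSA hP hπ H hd,
    sum_pathWeight_mul_pathSum_eq_sum_valueV hP hπ H r hd]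
  have hjensen := sq_sum_le_sum_mul_sq Finset.univ (fun s _ => hd.1 s) hd.2 (valueV H P r π 0)
  linarith [sum_valueV_sq_add_sum_pathWeight_mul_nextValueVar_le hP hπ H r hd]

end SecondMoment

section TrajWeight

variable {S A : Type}

lemma pathWeight_succ_eq_prod (P : ℕ → S → A → S → ℝ) (π : ℕ → S → A → ℝ) (d : S → ℝ) (n : ℕ)
    (p : Fin (n + 1) → S × A) :
    pathWeight (n + 1) P π d p
      = d (p 0).1 * (∏ h : Fin (n + 1), π h (p h).1 (p h).2)
          * ∏ i : Fin n, P i (p i.castSucc).1 (p i.castSucc).2 (p i.succ).1 := by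
  induction n generalizing P π d with
  | zero => simp [pathWeight]
  | succ n ih =>
    rw [← Fin.cons_self_tail p, pathWeight_cons, ih]
    simp only [Fin.tail, Fin.succ_zero_eq_one, timeShift_apply, Fin.prod_univ_succ,
      Fin.coe_ofNat_eq_mod, Nat.zero_mod, zero_add, Fin.val_succ, Fin.cons_zero,
      Fin.cons_self_tail, Fin.cons_succ, Fin.castSucc_zero, Fin.castSucc_succ]
    ring

lemma trajWeight_succ_eq_prod (P : ℕ → S → A → S → ℝ) (π : ℕ → S → A → ℝ) (d : S → ℝ) (n : ℕ)
    (p : Fin (n + 1) → S × A) :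
    trajWeight (n + 1) n.succ_pos P π d p
      = d (p 0).1 * (∏ h : Fin (n + 1), π h (p h).1 (p h).2)
          * ∏ i : Fin n, P i (p i.castSucc).1 (p i.castSucc).2 (p i.succ).1 := by
  rw [trajWeight, Finset.prod_mul_distrib, ← mul_assoc]
  congr 1
  rw [Fin.prod_univ_castSucc]
  simp [Fin.succ]

lemma trajWeight_eq_pathWeight {H : ℕ} (hH : 0 < H) (P : ℕ → S → A → S → ℝ)
    (π : ℕ → S → A → ℝ) (d : S → ℝ) (p : Fin H → S × A) :
    trajWeight H hH P π d p = pathWeight H P π d p := by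
  obtain ⟨n, rfl⟩ := Nat.exists_eq_add_one_of_ne_zero hH.ne'
  rw [trajWeight_succ_eq_prod, pathWeight_succ_eq_prod]

lemma trajWeight_nonneg [Fintype S] [Fintype A] {H : ℕ} (hH : 0 < H) {P : ℕ → S → A → S → ℝ}
    {π : ℕ → S → A → ℝ} {d : S → ℝ} (hP : IsKernel P) (hπ : IsPolicy π) (hd : IsDist d)
    (p : Fin H → S × A) : 0 ≤ trajWeight H hH P π d p := by
  obtain ⟨n, rfl⟩ := Nat.exists_eq_add_one_of_ne_zero hH.ne'
  rw [trajWeight_succ_eq_prod]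
  exact mul_nonneg (mul_nonneg (hd.1 _) (Finset.prod_nonneg fun _ _ => hπ.1 _ _ _))
    (Finset.prod_nonneg fun _ _ => hP.1 _ _ _ _)

end TrajWeight

section Moments

open ProbabilityTheory

variable {ι : Type*} [Fintype ι] {μ : ι → Measure ℝ} [∀ i, IsProbabilityMeasure (μ i)]

lemma memLp_pi_sum (hμ : ∀ i, MemLp id 2 (μ i)) :
    MemLp (fun x : ι → ℝ => ∑ i, x i) 2 (Measure.pi μ) :=
  memLp_finsetSum _ fun i _ => (hμ i).comp_measurePreserving (measurePreserving_eval μ i)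

lemma integral_pi_sum (hμ : ∀ i, Integrable id (μ i)) :
    ∫ x, ∑ i, x i ∂Measure.pi μ = ∑ i, ∫ y, y ∂μ i := by
  rw [integral_finsetSum (f := fun i (x : ι → ℝ) => x i) _ fun i _ =>
    integrable_comp_eval (f := id) (hμ i)]
  exact Finset.sum_congr rfl fun i _ =>
    integral_comp_eval (μ := μ) (i := i) (f := id) aestronglyMeasurable_id

lemma integral_pi_sum_sq (hμ : ∀ i, MemLp id 2 (μ i)) :
    ∫ x, (∑ i, x i) ^ 2 ∂Measure.pi μ = (∑ i, ∫ y, y ∂μ i) ^ 2 + ∑ i, Var[id; μ i] := by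
  have hvar := variance_sum_pi (X := fun _ => id) hμ
  rw [variance_eq_sub (X := ∑ i, fun x : ι → ℝ => id (x i)) (memLp_finsetSum' _ fun i _ =>
    (hμ i).comp_measurePreserving (measurePreserving_eval μ i))] at hvar
  simp only [Finset.sum_apply, Pi.pow_apply, id,
    integral_pi_sum fun i => (hμ i).integrable one_le_two] at hvar
  linarith

lemma integral_const_add_sq {μ : Measure ℝ} [IsProbabilityMeasure μ] (hμ : MemLp id 2 μ)
    (c : ℝ) : ∫ x, (c + x) ^ 2 ∂μ = Var[id; μ] + (c + ∫ x, x ∂μ) ^ 2 := by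
  have hvar := variance_eq_sub (X := fun x => c + x) ((memLp_const c).add hμ)
  rw [show Var[fun x => c + x; μ] = Var[id; μ] from
    variance_const_add aestronglyMeasurable_id c] at hvar
  have hmean : ∫ x, c + x ∂μ = c + ∫ x, x ∂μ :=
    (integral_add (integrable_const c) (hμ.integrable one_le_two)).trans (by simp)
  simp only [Pi.pow_apply, hmean] at hvar
  linarith

end Moments

section Rewards

open scoped ProbabilityTheory

variable {S A : Type} {R : ℕ → S → A → Measure ℝ}

lemma IsRewardDist.memLp (hR : IsRewardDist R) (t : ℕ) (s : S) (a : A) :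
    MemLp id 2 (R t s a) :=
  have := (hR t s a).1
  memLp_of_bounded (mem_ae_iff.mpr (hR t s a).2) aestronglyMeasurable_id 2

lemma condVar_eq_variance_add_nextValueVar [Fintype S] [Fintype A] {H : ℕ}
    {P : ℕ → S → A → S → ℝ} {π : ℕ → S → A → ℝ} (hP : IsKernel P) (hR : IsRewardDist R)
    (t : ℕ) (s : S) (a : A) :
    condVar H P R π t s a = Var[id; R t s a] + nextValueVar H P (rbar R) π t s a := by
  have := (hR t s a).1
  simp only [condVar, integral_const_add_sq (hR.memLp t s a), qval, nextValueVar, rbar]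
  set V := valueV H P (rbar R) π (t + 1)
  set m := ∫ x, x ∂(R t s a)
  have hexpand (s' : S) : P t s a s' * (Var[id; R t s a] + (V s' + m) ^ 2)
      = (Var[id; R t s a] + m ^ 2) * P t s a s' + P t s a s' * V s' ^ 2
        + 2 * m * (P t s a s' * V s') := by
    ring
  simp only [hexpand, Finset.sum_add_distrib, ← Finset.mul_sum, hP.2 t s a]
  ring

end Rewards

section TrajMeasure

variable {S A : Type} [Fintype S] [Fintype A] [MeasurableSpace S] [MeasurableSpace A]
  {H : ℕ} (hH : 0 < H) {P : ℕ → S → A → S → ℝ} {R : ℕ → S → A → Measure ℝ}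
  {π : ℕ → S → A → ℝ} {d : S → ℝ}

lemma trajMeasure_eq_sum_map (hR : IsRewardDist R) :
    trajMeasure H hH P R π d = ∑ p, ENNReal.ofReal (trajWeight H hH P π d p) •
      (Measure.pi fun h : Fin H => R h (p h).1 (p h).2).map fun x h => (p h, x h) := by
  refine Finset.sum_congr rfl fun p _ => ?_
  have (h : Fin H) := (hR h (p h).1 (p h).2).1
  simp_rw [Measure.dirac_prod]
  rw [Measure.pi_map_pi fun h => measurable_prodMk_left.aemeasurable]

lemma integral_trajMeasure (hP : IsKernel P) (hR : IsRewardDist R) (hπ : IsPolicy π)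
    (hd : IsDist d) {f : (Fin H → (S × A) × ℝ) → ℝ} (hf : Measurable f)
    (hfp : ∀ p : Fin H → S × A, Integrable (fun x => f fun h => (p h, x h))
      (Measure.pi fun h : Fin H => R h (p h).1 (p h).2)) :
    ∫ ω, f ω ∂trajMeasure H hH P R π d
      = ∑ p, pathWeight H P π d p * ∫ x, f (fun h => (p h, x h))
          ∂Measure.pi fun h : Fin H => R h (p h).1 (p h).2 := by
  have hembed (p : Fin H → S × A) : Measurable fun (x : Fin H → ℝ) h => (p h, x h) := by
    fun_prop
  rw [trajMeasure_eq_sum_map hH hR, integral_finsetSum_measure fun p _ =>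
    ((integrable_map_measure hf.aestronglyMeasurable (hembed p).aemeasurable).mpr
      (hfp p)).smul_measure ENNReal.ofReal_ne_top]
  refine Finset.sum_congr rfl fun p _ => ?_
  rw [integral_smul_measure, ENNReal.toReal_ofReal (trajWeight_nonneg hH hP hπ hd p),
    integral_map (hembed p).aemeasurable hf.aestronglyMeasurable, smul_eq_mul,
    trajWeight_eq_pathWeight]

end TrajMeasure

theorem mdp_return_variance_ge_efficiency_term_general {S A : Type} [Fintype S] [Fintype A]
    [MeasurableSpace S]
    [MeasurableSpace A]
    (H : ℕ) (hH : 0 < H)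
    (P : ℕ → S → A → S → ℝ) (R : ℕ → S → A → Measure ℝ)
    (π : ℕ → S → A → ℝ) (d1 : S → ℝ)
    (hP : IsKernel P) (hR : IsRewardDist R) (hπ : IsPolicy π) (hd1 : IsDist d1) :
    ∑ t ∈ Finset.range H, ∑ s : S, ∑ a : A, occSA P π d1 t s a * condVar H P R π t s a
      ≤ (∫ ω, (∑ h : Fin H, (ω h).2) ^ 2 ∂(trajMeasure H hH P R π d1))
          - (∫ ω, (∑ h : Fin H, (ω h).2) ∂(trajMeasure H hH P R π d1)) ^ 2 := by
  have := fun t s a => (hR t s a).1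
  have hreturn (p : Fin H → S × A) := memLp_pi_sum fun h : Fin H => hR.memLp h (p h).1 (p h).2
  have hmean : ∫ ω, (∑ h : Fin H, (ω h).2) ∂(trajMeasure H hH P R π d1)
      = ∑ p, pathWeight H P π d1 p * pathSum (rbar R) p := by
    rw [integral_trajMeasure hH hP hR hπ hd1 (by fun_prop) fun p =>
      (hreturn p).integrable one_le_two]
    simp only [integral_pi_sum fun h => (hR.memLp _ _ _).integrable one_le_two]
    rfl
  have hsq : ∫ ω, (∑ h : Fin H, (ω h).2) ^ 2 ∂(trajMeasure H hH P R π d1)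
      = ∑ p, pathWeight H P π d1 p * (pathSum (rbar R) p ^ 2
          + pathSum (fun t s a => ProbabilityTheory.variance id (R t s a)) p) := by
    rw [integral_trajMeasure hH hP hR hπ hd1 (by fun_prop) fun p => (hreturn p).integrable_sq]
    simp only [integral_pi_sum_sq fun h => hR.memLp _ _ _]
    rfl
  have hnoise := sum_pathWeight_mul_pathSum_eq_sum_occSA hP hπ H hd1 fun t s a =>
    ProbabilityTheory.variance id (R t s a)
  have hsignal := sum_occSA_mul_nextValueVar_le hP hπ H (rbar R) hd1
  simp only [condVar_eq_variance_add_nextValueVar hP hR, mul_add, Finset.sum_add_distrib,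
    hmean, hsq] at hnoise ⊢
  linarith

/-- For any policy `π` in a finite-horizon tabular MDP with
rewards in `[0,1]`, the variance of the Monte Carlo return is at least the
semiparametric efficiency term:
`Var_π[Σ_t r_t] ≥ Σ_t E_π[ Var[V^π_{t+1}(s_{t+1}) + r_t | s_t, a_t] ]`. -/
theorem mdp_return_variance_ge_efficiency_term {S A : Type} [Fintype S] [Fintype A]
    [Nonempty S] [Nonempty A]
    [MeasurableSpace S] [MeasurableSingletonClass S]
    [MeasurableSpace A] [MeasurableSingletonClass A]
    (H : ℕ) (hH : 0 < H)
    (P : ℕ → S → A → S → ℝ) (R : ℕ → S → A → Measure ℝ)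
    (π : ℕ → S → A → ℝ) (d1 : S → ℝ)
    (hP : IsKernel P) (hR : IsRewardDist R) (hπ : IsPolicy π) (hd1 : IsDist d1) :
    ∑ t ∈ Finset.range H, ∑ s : S, ∑ a : A, occSA P π d1 t s a * condVar H P R π t s a
      ≤ (∫ ω, (∑ h : Fin H, (ω h).2) ^ 2 ∂(trajMeasure H hH P R π d1))
          - (∫ ω, (∑ h : Fin H, (ω h).2) ∂(trajMeasure H hH P R π d1)) ^ 2 :=
  mdp_return_variance_ge_efficiency_term_general H hH P R π d1 hP hR hπ hd1
end

section
/- (Intrinsic bound recovers the single-policy-coverage minimax rate.) In a finite-horizon tabular MDP with rewards in [0,1], let π* be a deterministic optimal policy with value functions V*, let μ be a behavior policy, and let n ≥ 1. Suppose there is C* < ∞ such that d^{π*}_h(s,a) ≤ C* · d^μ_h(s,a) for all (h,s,a). Then Σ_{h=1}^H Σ_{(s,a): d^{π*}_h(s,a)>0} d^{π*}_h(s,a) · sqrt( Var[ r_h + V*_{h+1}(s_{h+1}) | s_h=s, a_h=a ] / (n · d^μ_h(s,a)) ) ≤ sqrt( H³ · S · C* / n ), where S = |S| is the number of states. -/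
open Finset MeasureTheory

section AuxMeasure

/-- a.e. membership in `[0,1]` from null complement. -/
lemma aux_ae_Icc {ν : Measure ℝ} (hν : ν ((Set.Icc (0:ℝ) 1)ᶜ) = 0) :
    ∀ᵐ x ∂ν, x ∈ Set.Icc (0:ℝ) 1 := by
  rw [MeasureTheory.ae_iff]; simpa [Set.compl_def] using hν

/-- Continuous functions are integrable w.r.t. a probability measure supported on `[0,1]`. -/
lemma aux_integrable_cont {ν : Measure ℝ} [IsProbabilityMeasure ν]
    (hν : ν ((Set.Icc (0:ℝ) 1)ᶜ) = 0) {f : ℝ → ℝ} (hf : Continuous f) :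
    Integrable f ν := by
  obtain ⟨x0, -, hx0⟩ := (isCompact_Icc (a:=(0:ℝ)) (b:=1)).exists_isMaxOn ⟨0, by norm_num⟩
    hf.abs.continuousOn
  exact (integrable_const (|f x0|)).mono' hf.aestronglyMeasurable
    ((aux_ae_Icc hν).mono fun x hx => by simpa using hx0 hx)

/-- Jensen: `(∫ f)² ≤ ∫ f²` for a probability measure supported on `[0,1]`. -/
lemma aux_sq_integral_le {ν : Measure ℝ} [IsProbabilityMeasure ν]
    (hν : ν ((Set.Icc (0:ℝ) 1)ᶜ) = 0) {f : ℝ → ℝ} (hf : Continuous f) :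
    (∫ x, f x ∂ν) ^ 2 ≤ ∫ x, f x ^ 2 ∂ν := by
  set m := ∫ x, f x ∂ν with hm
  have hif : Integrable f ν := aux_integrable_cont hν hf
  have hif2 : Integrable (fun x => f x ^ 2) ν := aux_integrable_cont hν (by continuity)
  have h0 : 0 ≤ ∫ x, (f x - m) ^ 2 ∂ν := integral_nonneg fun x => sq_nonneg _
  have heq : ∫ x, (f x - m) ^ 2 ∂ν = (∫ x, f x ^ 2 ∂ν) - 2 * m * m + m ^ 2 := by
    have hfe : (fun x => (f x - m) ^ 2) = fun x => (f x ^ 2 - (2 * m) * f x) + m ^ 2 := by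
      funext x; ring
    have ha : Integrable (fun x => f x ^ 2 - (2 * m) * f x) ν := hif2.sub (hif.const_mul _)
    rw [hfe, integral_add ha (integrable_const _),
      integral_sub hif2 (hif.const_mul _), integral_const_mul, integral_const]
    simp [← hm]
  nlinarith [h0, heq]

/-- `∫ (c+x)² = c² + 2c·(∫x) + ∫x²` for a probability measure supported on `[0,1]`. -/
lemma aux_integral_const_add_sq {ν : Measure ℝ} [IsProbabilityMeasure ν]
    (hν : ν ((Set.Icc (0:ℝ) 1)ᶜ) = 0) (c : ℝ) :
    ∫ x, (c + x) ^ 2 ∂ν = c ^ 2 + 2 * c * (∫ x, x ∂ν) + ∫ x, x ^ 2 ∂ν := by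
  have h1 : Integrable (fun x : ℝ => 2 * c * x) ν := aux_integrable_cont hν (by continuity)
  have h2 : Integrable (fun x : ℝ => x ^ 2) ν := aux_integrable_cont hν (by continuity)
  have hfe : (fun x : ℝ => (c + x) ^ 2) = fun x => (2 * c * x + x ^ 2) + c ^ 2 := by
    funext x; ring
  have ha : Integrable (fun x : ℝ => 2 * c * x + x ^ 2) ν := h1.add h2
  rw [hfe, integral_add ha (integrable_const _), integral_add h1 h2,
    integral_const_mul, integral_const]
  simp; ring

lemma aux_integral_id_nonneg {ν : Measure ℝ} (hν : ν ((Set.Icc (0:ℝ) 1)ᶜ) = 0) :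
    0 ≤ ∫ x, x ∂ν :=
  integral_nonneg_of_ae ((aux_ae_Icc hν).mono fun _ hx => hx.1)

lemma aux_integral_id_le_one {ν : Measure ℝ} [IsProbabilityMeasure ν]
    (hν : ν ((Set.Icc (0:ℝ) 1)ᶜ) = 0) : ∫ x, x ∂ν ≤ 1 := by
  have := integral_mono_ae (aux_integrable_cont hν continuous_id) (integrable_const 1)
    ((aux_ae_Icc hν).mono fun x hx => hx.2)
  simpa using this

lemma aux_integral_sq_le_id {ν : Measure ℝ} [IsProbabilityMeasure ν]
    (hν : ν ((Set.Icc (0:ℝ) 1)ᶜ) = 0) : ∫ x, x ^ 2 ∂ν ≤ ∫ x, x ∂ν := by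
  refine integral_mono_ae (aux_integrable_cont hν (by continuity))
    (aux_integrable_cont hν continuous_id)
    ((aux_ae_Icc hν).mono fun x hx => ?_)
  show x ^ 2 ≤ x
  nlinarith [hx.1, hx.2]

end AuxMeasure

section AuxFinJensen

variable {S : Type} [Fintype S]

/-- Finite Jensen: `(Σ p f)² ≤ Σ p f²` for weights `p` on the simplex. -/
lemma aux_sq_sum_le_weighted {p f : S → ℝ} (hp : ∀ s, 0 ≤ p s) (hp1 : ∑ s : S, p s = 1) :
    (∑ s : S, p s * f s) ^ 2 ≤ ∑ s : S, p s * f s ^ 2 := by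
  set m := ∑ s : S, p s * f s with hm
  have h0 : 0 ≤ ∑ s : S, p s * (f s - m) ^ 2 :=
    Finset.sum_nonneg fun s _ => mul_nonneg (hp s) (sq_nonneg _)
  have heq : ∑ s : S, p s * (f s - m) ^ 2
      = (∑ s : S, p s * f s ^ 2) - 2 * m * m + m ^ 2 * 1 := by
    have hfe : ∀ s : S, p s * (f s - m) ^ 2
        = p s * f s ^ 2 - 2 * m * (p s * f s) + m ^ 2 * p s := fun s => by ring
    rw [Finset.sum_congr rfl fun s _ => hfe s]
    rw [Finset.sum_add_distrib, Finset.sum_sub_distrib, ← Finset.mul_sum, ← Finset.mul_sum,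
      hp1, ← hm]
  nlinarith [h0, heq]

end AuxFinJensen

section AuxTelescope

lemma aux_telescope (H : ℕ) (F c : ℕ → ℝ) (hF : ∀ t < H, F t = c t + F (t + 1))
    (hFH : F H = 0) : ∑ t ∈ Finset.range H, c t = F 0 := by
  have key : ∀ j, j ≤ H → ∑ t ∈ Finset.range j, c t = F 0 - F j := by
    intro j
    induction j with
    | zero => simp
    | succ j ih =>
      intro hj
      rw [Finset.sum_range_succ, ih (by omega)]
      have := hF j (by omega)
      linarith
  have := key H le_rfl
  rw [this, hFH]; ring

end AuxTelescope

section AuxMDP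

variable {S A : Type} [Fintype S] [Fintype A] [DecidableEq A]

/-- Bounds on the value function: `0 ≤ V_t ≤ H - t`. -/
lemma aux_valueV_bounds (H : ℕ) (P : ℕ → S → A → S → ℝ) (r : ℕ → S → A → ℝ)
    (π : ℕ → S → A → ℝ) (hP : IsKernel P) (hπ : IsPolicy π)
    (hr0 : ∀ t s a, 0 ≤ r t s a) (hr1 : ∀ t s a, r t s a ≤ 1) :
    ∀ t (s : S), 0 ≤ valueV H P r π t s ∧ valueV H P r π t s ≤ ((H - t : ℕ) : ℝ) := by
  suffices h : ∀ k t, H - t ≤ k → ∀ s : S,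
      0 ≤ valueV H P r π t s ∧ valueV H P r π t s ≤ ((H - t : ℕ) : ℝ) from
    fun t s => h (H - t) t le_rfl s
  intro k
  induction k with
  | zero =>
    intro t ht s
    have hns : ¬ t < H := by omega
    rw [valueV, dif_neg hns]
    exact ⟨le_rfl, by positivity⟩
  | succ k ih =>
    intro t ht s
    by_cases hlt : t < H
    · rw [valueV, dif_pos hlt]
      have ihb : ∀ s' : S, 0 ≤ valueV H P r π (t + 1) s' ∧
          valueV H P r π (t + 1) s' ≤ ((H - (t + 1) : ℕ) : ℝ) :=
        fun s' => ih (t + 1) (by omega) s'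
      set K : ℝ := ((H - (t + 1) : ℕ) : ℝ) with hK
      have hKnn : 0 ≤ K := by positivity
      have hS1 : ∀ a, 0 ≤ ∑ s' : S, P t s a s' * valueV H P r π (t + 1) s' ∧
          (∑ s' : S, P t s a s' * valueV H P r π (t + 1) s') ≤ K := by
        intro a
        constructor
        · exact Finset.sum_nonneg fun s' _ => mul_nonneg (hP.1 t s a s') (ihb s').1
        · calc (∑ s' : S, P t s a s' * valueV H P r π (t + 1) s')
              ≤ ∑ s' : S, P t s a s' * K :=
                Finset.sum_le_sum fun s' _ =>
                  mul_le_mul_of_nonneg_left (ihb s').2 (hP.1 t s a s')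
            _ = K := by rw [← Finset.sum_mul, hP.2 t s a, one_mul]
      have hcast : ((H - t : ℕ) : ℝ) = K + 1 := by
        rw [hK]
        have he : H - t = (H - (t + 1)) + 1 := by omega
        rw [he]; push_cast; ring
      constructor
      · exact Finset.sum_nonneg fun a _ => mul_nonneg (hπ.1 t s a)
          (add_nonneg (hr0 t s a) (hS1 a).1)
      · rw [hcast]
        calc (∑ a : A, π t s a * (r t s a + ∑ s' : S, P t s a s' * valueV H P r π (t + 1) s'))
            ≤ ∑ a : A, π t s a * (1 + K) :=
              Finset.sum_le_sum fun a _ => mul_le_mul_of_nonneg_left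
                (add_le_add (hr1 t s a) (hS1 a).2) (hπ.1 t s a)
          _ = 1 + K := by rw [← Finset.sum_mul, hπ.2 t s, one_mul]
          _ = K + 1 := by ring
    · rw [valueV, dif_neg hlt]
      exact ⟨le_rfl, by positivity⟩

/-- For the deterministic policy, `V_t(s) = Q_t(s, det t s)` (when `t < H`). -/
lemma aux_valueV_det (H : ℕ) (P : ℕ → S → A → S → ℝ) (r : ℕ → S → A → ℝ)
    (det : ℕ → S → A) {t : ℕ} (ht : t < H) (s : S) :
    valueV H P r (fun u v a => if a = det u v then (1:ℝ) else 0) t s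
      = qval H P r (fun u v a => if a = det u v then (1:ℝ) else 0) t s (det t s) := by
  rw [valueV, dif_pos ht]
  simp [qval, ite_mul, Finset.sum_ite_eq']

/-- Second moment function `M_t(s)` along the deterministic policy. -/
noncomputable def auxM {S A : Type} [Fintype S] [Fintype A] [DecidableEq A]
    (H : ℕ) (P : ℕ → S → A → S → ℝ) (R : ℕ → S → A → Measure ℝ)
    (det : ℕ → S → A) (t : ℕ) : S → ℝ :=
  if _h : t < H then fun s =>
    (∫ x, x ^ 2 ∂(R t s (det t s)))
      + 2 * rbar R t s (det t s) *
        (∑ s' : S, P t s (det t s) s' *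
          valueV H P (rbar R) (fun u v a => if a = det u v then (1:ℝ) else 0) (t + 1) s')
      + ∑ s' : S, P t s (det t s) s' * auxM H P R det (t + 1) s'
  else fun _ => 0
termination_by H - t
decreasing_by omega

/-- `M_t(s) ≤ (H - t) V_t(s)`. -/
lemma aux_M_le (H : ℕ) (P : ℕ → S → A → S → ℝ) (R : ℕ → S → A → Measure ℝ)
    (det : ℕ → S → A) (hP : IsKernel P) (hR : IsRewardDist R)
    (hpol : IsPolicy (fun u v a => if a = det u v then (1:ℝ) else 0)) :
    ∀ t (s : S), auxM H P R det t s ≤ ((H - t : ℕ) : ℝ) *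
      valueV H P (rbar R) (fun u v a => if a = det u v then (1:ℝ) else 0) t s := by
  have hr0 : ∀ t (s : S) (a : A), 0 ≤ rbar R t s a := fun t s a =>
    aux_integral_id_nonneg (hR t s a).2
  have hr1 : ∀ t (s : S) (a : A), rbar R t s a ≤ 1 := fun t s a => by
    haveI := (hR t s a).1; exact aux_integral_id_le_one (hR t s a).2
  have hVb := aux_valueV_bounds H P (rbar R) _ hP hpol hr0 hr1
  suffices h : ∀ k t, H - t ≤ k → ∀ s : S, auxM H P R det t s ≤ ((H - t : ℕ) : ℝ) *
      valueV H P (rbar R) (fun u v a => if a = det u v then (1:ℝ) else 0) t s from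
    fun t s => h (H - t) t le_rfl s
  intro k
  induction k with
  | zero =>
    intro t ht s
    have hns : ¬ t < H := by omega
    rw [auxM, dif_neg hns, valueV, dif_neg hns]
    simp
  | succ k ih =>
    intro t ht s
    by_cases hlt : t < H
    · rw [auxM, dif_pos hlt, aux_valueV_det H P (rbar R) det hlt s]
      set a := det t s with ha
      haveI := (hR t s a).1
      have hsupp := (hR t s a).2
      set V' := valueV H P (rbar R) (fun u v a => if a = det u v then (1:ℝ) else 0) (t + 1)
        with hV'
      set K : ℝ := ((H - (t + 1) : ℕ) : ℝ) with hK
      have hKnn : 0 ≤ K := by positivity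
      set S1 : ℝ := ∑ s' : S, P t s a s' * V' s' with hS1def
      have hS10 : 0 ≤ S1 :=
        Finset.sum_nonneg fun s' _ => mul_nonneg (hP.1 t s a s') (hVb (t + 1) s').1
      have hS1K : S1 ≤ K := by
        calc S1 ≤ ∑ s' : S, P t s a s' * K :=
              Finset.sum_le_sum fun s' _ =>
                mul_le_mul_of_nonneg_left (hVb (t + 1) s').2 (hP.1 t s a s')
          _ = K := by rw [← Finset.sum_mul, hP.2 t s a, one_mul]
      have hMsum : (∑ s' : S, P t s a s' * auxM H P R det (t + 1) s') ≤ K * S1 := by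
        calc (∑ s' : S, P t s a s' * auxM H P R det (t + 1) s')
            ≤ ∑ s' : S, P t s a s' * (K * V' s') :=
              Finset.sum_le_sum fun s' _ =>
                mul_le_mul_of_nonneg_left (ih (t + 1) (by omega) s') (hP.1 t s a s')
          _ = K * S1 := by
              rw [hS1def, Finset.mul_sum]
              exact Finset.sum_congr rfl fun s' _ => by ring
      have hm2 : ∫ x, x ^ 2 ∂(R t s a) ≤ rbar R t s a := aux_integral_sq_le_id hsupp
      have hrb0 : 0 ≤ rbar R t s a := hr0 t s a
      have hrb1 : rbar R t s a ≤ 1 := hr1 t s a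
      have hq : qval H P (rbar R) (fun u v a => if a = det u v then (1:ℝ) else 0) t s a
          = rbar R t s a + S1 := rfl
      have hcast : ((H - t : ℕ) : ℝ) = K + 1 := by
        rw [hK]
        have he : H - t = (H - (t + 1)) + 1 := by omega
        rw [he]; push_cast; ring
      rw [hq, hcast]
      nlinarith [mul_nonneg hrb0 (sub_nonneg.2 hS1K), mul_nonneg hS10 (sub_nonneg.2 hrb1)]
    · rw [auxM, dif_neg hlt, valueV, dif_neg hlt]
      simp

/-- The conditional variance is nonnegative. -/
lemma aux_condVar_nonneg (H : ℕ) (P : ℕ → S → A → S → ℝ) (R : ℕ → S → A → Measure ℝ)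
    (π : ℕ → S → A → ℝ) (hP : IsKernel P) (hR : IsRewardDist R) (t : ℕ) (s : S) (a : A) :
    0 ≤ condVar H P R π t s a := by
  haveI := (hR t s a).1
  have hsupp := (hR t s a).2
  set V' := valueV H P (rbar R) π (t + 1) with hV'
  set rb := rbar R t s a with hrb
  have hq : rb + (∑ s' : S, P t s a s' * V' s') = ∑ s' : S, P t s a s' * (V' s' + rb) := by
    have : ∀ s' : S, P t s a s' * (V' s' + rb) = P t s a s' * V' s' + rb * P t s a s' :=
      fun s' => by ring
    rw [Finset.sum_congr rfl fun s' _ => this s', Finset.sum_add_distrib, ← Finset.mul_sum,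
      hP.2 t s a, mul_one, add_comm]
  have h1 : (∑ s' : S, P t s a s' * (V' s' + rb)) ^ 2
      ≤ ∑ s' : S, P t s a s' * (V' s' + rb) ^ 2 :=
    aux_sq_sum_le_weighted (fun s' => hP.1 t s a s') (hP.2 t s a)
  have key1 : ∀ s' : S, (V' s' + rb) ^ 2 ≤ ∫ x, (V' s' + x) ^ 2 ∂(R t s a) := by
    intro s'
    have hJ := aux_sq_integral_le hsupp (f := fun x => V' s' + x) (by continuity)
    have hid : Integrable (fun x : ℝ => x) (R t s a) :=
      aux_integrable_cont hsupp continuous_id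
    have hint : ∫ x, (V' s' + x) ∂(R t s a) = V' s' + rb := by
      rw [integral_add (integrable_const _) hid, integral_const]
      simp [hrb, rbar]
    rwa [hint] at hJ
  have h2 : (∑ s' : S, P t s a s' * (V' s' + rb) ^ 2)
      ≤ ∑ s' : S, P t s a s' * ∫ x, (V' s' + x) ^ 2 ∂(R t s a) :=
    Finset.sum_le_sum fun s' _ => mul_le_mul_of_nonneg_left (key1 s') (hP.1 t s a s')
  have hqv : qval H P (rbar R) π t s a = rb + (∑ s' : S, P t s a s' * V' s') := rfl
  unfold condVar
  rw [hqv, hq]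
  linarith

/-- Pointwise one-step identity for `W_t = M_t - V_t²`. -/
lemma aux_W_step (H : ℕ) (P : ℕ → S → A → S → ℝ) (R : ℕ → S → A → Measure ℝ)
    (det : ℕ → S → A) (hP : IsKernel P) (hR : IsRewardDist R) {t : ℕ} (ht : t < H) (s : S) :
    auxM H P R det t s
        - (valueV H P (rbar R) (fun u v a => if a = det u v then (1:ℝ) else 0) t s) ^ 2
      = condVar H P R (fun u v a => if a = det u v then (1:ℝ) else 0) t s (det t s)
        + ∑ s' : S, P t s (det t s) s' *
            (auxM H P R det (t + 1) s'
              - (valueV H P (rbar R) (fun u v a => if a = det u v then (1:ℝ) else 0)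
                  (t + 1) s') ^ 2) := by
  set a := det t s with ha
  haveI := (hR t s a).1
  have hsupp := (hR t s a).2
  set V' := valueV H P (rbar R) (fun u v a => if a = det u v then (1:ℝ) else 0) (t + 1)
    with hV'
  set rb := rbar R t s a with hrb
  set m2 : ℝ := ∫ x, x ^ 2 ∂(R t s a) with hm2
  have hMt : auxM H P R det t s
      = m2 + 2 * rb * (∑ s' : S, P t s a s' * V' s')
        + ∑ s' : S, P t s a s' * auxM H P R det (t + 1) s' := by
    rw [auxM, dif_pos ht]
  have hVt : valueV H P (rbar R) (fun u v a => if a = det u v then (1:ℝ) else 0) t s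
      = rb + ∑ s' : S, P t s a s' * V' s' := by
    rw [aux_valueV_det H P (rbar R) det ht s]; rfl
  have hexp : ∀ s' : S, ∫ x, (V' s' + x) ^ 2 ∂(R t s a)
      = V' s' ^ 2 + 2 * V' s' * rb + m2 := fun s' => by
    rw [hm2, hrb, rbar]; exact aux_integral_const_add_sq hsupp (V' s')
  have hcv : condVar H P R (fun u v a => if a = det u v then (1:ℝ) else 0) t s a
      = (∑ s' : S, P t s a s' * V' s' ^ 2) + 2 * rb * (∑ s' : S, P t s a s' * V' s') + m2
        - (rb + ∑ s' : S, P t s a s' * V' s') ^ 2 := by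
    unfold condVar
    have hqv : qval H P (rbar R) (fun u v a => if a = det u v then (1:ℝ) else 0) t s a
        = rb + (∑ s' : S, P t s a s' * V' s') := rfl
    rw [hqv]
    congr 1
    rw [Finset.sum_congr rfl fun s' _ => by rw [hexp s']]
    have : ∀ s' : S, P t s a s' * (V' s' ^ 2 + 2 * V' s' * rb + m2)
        = P t s a s' * V' s' ^ 2 + 2 * rb * (P t s a s' * V' s') + m2 * P t s a s' :=
      fun s' => by ring
    rw [Finset.sum_congr rfl fun s' _ => this s', Finset.sum_add_distrib,
      Finset.sum_add_distrib, ← Finset.mul_sum, ← Finset.mul_sum, hP.2 t s a, mul_one]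
  have hsub : ∑ s' : S, P t s a s' * (auxM H P R det (t + 1) s' - V' s' ^ 2)
      = (∑ s' : S, P t s a s' * auxM H P R det (t + 1) s')
        - ∑ s' : S, P t s a s' * V' s' ^ 2 := by
    rw [← Finset.sum_sub_distrib]
    exact Finset.sum_congr rfl fun s' _ => by ring
  rw [hMt, hVt, hcv, hsub]
  ring

/-- Occupancy measures are nonnegative. -/
lemma aux_occS_nonneg (P : ℕ → S → A → S → ℝ) (π : ℕ → S → A → ℝ) (d1 : S → ℝ)
    (hπ0 : ∀ t (s : S) (a : A), 0 ≤ π t s a) (hd1 : ∀ s : S, 0 ≤ d1 s)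
    (hP0 : ∀ t (s : S) (a : A) (s' : S), 0 ≤ P t s a s') :
    ∀ t (s : S), 0 ≤ occS P π d1 t s := by
  intro t
  induction t with
  | zero => exact hd1
  | succ t ih =>
    intro s'
    exact Finset.sum_nonneg fun s _ => Finset.sum_nonneg fun a _ =>
      mul_nonneg (mul_nonneg (ih s) (hπ0 t s a)) (hP0 t s a s')

end AuxMDP

/-- Intrinsic bound recovers the single-policy-coverage minimax
rate.  In a finite-horizon tabular MDP with rewards in `[0,1]`, let `π*` be a
deterministic optimal policy with value functions `V*`, let `μ` be a behavior
policy, and `n ≥ 1`.  If `d^{π*}_h(s,a) ≤ C* d^μ_h(s,a)` for all `(h,s,a)`, then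
`Σ_h Σ_{(s,a): d^{π*}_h(s,a)>0} d^{π*}_h(s,a)
   √( Var[r_h + V*_{h+1}(s_{h+1}) | s_h=s, a_h=a] / (n d^μ_h(s,a)) )
 ≤ √( H³ S C* / n )` with `S` the number of states. -/
theorem intrinsic_bound_single_policy_coverage {S A : Type} [Fintype S] [Fintype A]
    [Nonempty S] [Nonempty A] [DecidableEq A]
    (H : ℕ) (hH : 1 ≤ H) (n : ℕ) (hn : 1 ≤ n)
    (P : ℕ → S → A → S → ℝ) (R : ℕ → S → A → Measure ℝ)
    (pistarDet : ℕ → S → A) (μ : ℕ → S → A → ℝ) (d1 : S → ℝ)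
    (pistar : ℕ → S → A → ℝ)
    (hpistar : pistar = fun t s a => if a = pistarDet t s then (1 : ℝ) else 0)
    (hP : IsKernel P) (hR : IsRewardDist R) (hμ : IsPolicy μ) (hd1 : IsDist d1)
    (hopt : ∀ π' : ℕ → S → A → ℝ, IsPolicy π' →
      vval H P (rbar R) π' d1 ≤ vval H P (rbar R) pistar d1)
    (Cstar : ℝ)
    (hC : ∀ t < H, ∀ (s : S) (a : A),
      occSA P pistar d1 t s a ≤ Cstar * occSA P μ d1 t s a) :
    ∑ t ∈ Finset.range H, ∑ s : S, ∑ a : A,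
        (if 0 < occSA P pistar d1 t s a then
          occSA P pistar d1 t s a *
            Real.sqrt (condVar H P R pistar t s a / ((n : ℝ) * occSA P μ d1 t s a))
        else 0)
      ≤ Real.sqrt ((H : ℝ) ^ 3 * (Fintype.card S : ℝ) * Cstar / (n : ℝ)) := by
  subst hpistar
  clear hopt
  have hn' : (0:ℝ) < n := by exact_mod_cast hn
  have hdp : IsPolicy (fun u v a => if a = pistarDet u v then (1:ℝ) else 0) := by
    constructor
    · intro t s a; dsimp only; split <;> norm_num
    · intro t s; simp [Finset.sum_ite_eq']
  have hr0 : ∀ t (s : S) (a : A), 0 ≤ rbar R t s a := fun t s a =>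
    aux_integral_id_nonneg (hR t s a).2
  have hr1 : ∀ t (s : S) (a : A), rbar R t s a ≤ 1 := fun t s a => by
    haveI := (hR t s a).1; exact aux_integral_id_le_one (hR t s a).2
  have hoccnn : ∀ t (s : S),
      0 ≤ occS P (fun u v a => if a = pistarDet u v then (1:ℝ) else 0) d1 t s :=
    aux_occS_nonneg P _ d1 hdp.1 hd1.1 hP.1
  have hoccμnn : ∀ t (s : S) (a : A), 0 ≤ occSA P μ d1 t s a := fun t s a =>
    mul_nonneg (aux_occS_nonneg P μ d1 hμ.1 hd1.1 hP.1 t s) (hμ.1 t s a)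
  have hcvnn : ∀ t (s : S) (a : A),
      0 ≤ condVar H P R (fun u v a => if a = pistarDet u v then (1:ℝ) else 0) t s a :=
    fun t s a => aux_condVar_nonneg H P R _ hP hR t s a
  -- Cstar is positive
  obtain ⟨s0, hs0⟩ : ∃ s : S, 0 < d1 s := by
    by_contra hcon; push_neg at hcon
    have h1 : ∑ s : S, d1 s ≤ 0 := Finset.sum_nonpos fun s _ => hcon s
    rw [hd1.2] at h1; linarith
  have hCpos : 0 < Cstar := by
    have h1 := hC 0 hH s0 (pistarDet 0 s0)
    have h2 : occSA P (fun u v a => if a = pistarDet u v then (1:ℝ) else 0) d1 0 s0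
        (pistarDet 0 s0) = d1 s0 := by simp [occSA, occS]
    rw [h2] at h1
    have h3 := hoccμnn 0 s0 (pistarDet 0 s0)
    by_contra hle; push_neg at hle
    nlinarith
  -- termwise bound
  have hterm : ∀ t ∈ Finset.range H, ∀ s : S,
      (∑ a : A,
        (if 0 < occSA P (fun u v a => if a = pistarDet u v then (1:ℝ) else 0) d1 t s a then
          occSA P (fun u v a => if a = pistarDet u v then (1:ℝ) else 0) d1 t s a *
            Real.sqrt (condVar H P R (fun u v a => if a = pistarDet u v then (1:ℝ) else 0)
              t s a / ((n : ℝ) * occSA P μ d1 t s a))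
        else 0))
      ≤ Real.sqrt (Cstar / n *
          (occS P (fun u v a => if a = pistarDet u v then (1:ℝ) else 0) d1 t s *
            condVar H P R (fun u v a => if a = pistarDet u v then (1:ℝ) else 0) t s
              (pistarDet t s))) := by
    intro t htm s
    rw [Finset.mem_range] at htm
    rw [Finset.sum_eq_single (pistarDet t s)
      (fun a _ hne => by simp [occSA, hne]) (fun h => absurd (Finset.mem_univ _) h)]
    have hsa : occSA P (fun u v a => if a = pistarDet u v then (1:ℝ) else 0) d1 t s
        (pistarDet t s)
        = occS P (fun u v a => if a = pistarDet u v then (1:ℝ) else 0) d1 t s := by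
      simp [occSA]
    rw [hsa]
    by_cases hpos : 0 < occS P (fun u v a => if a = pistarDet u v then (1:ℝ) else 0) d1 t s
    · rw [if_pos hpos]
      set occ := occS P (fun u v a => if a = pistarDet u v then (1:ℝ) else 0) d1 t s with hocc
      set dm := occSA P μ d1 t s (pistarDet t s) with hdm
      set cV := condVar H P R (fun u v a => if a = pistarDet u v then (1:ℝ) else 0) t s
        (pistarDet t s) with hcVd
      have hcov : occ ≤ Cstar * dm := by
        have := hC t htm s (pistarDet t s); rw [hsa] at this; exact this
      have hdmnn : 0 ≤ dm := hoccμnn t s (pistarDet t s)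
      have hdmpos : 0 < dm := by
        by_contra hle; push_neg at hle; nlinarith
      have hcVnn : 0 ≤ cV := hcvnn t s (pistarDet t s)
      have step1 : occ * Real.sqrt (cV / ((n : ℝ) * dm))
          = Real.sqrt (occ ^ 2 * (cV / ((n : ℝ) * dm))) := by
        rw [Real.sqrt_mul (sq_nonneg _), Real.sqrt_sq hpos.le]
      rw [step1]
      apply Real.sqrt_le_sqrt
      have hnd : (0:ℝ) < (n : ℝ) * dm := by positivity
      rw [show occ ^ 2 * (cV / ((n : ℝ) * dm)) = occ ^ 2 * cV / ((n : ℝ) * dm) from by ring,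
        show Cstar / (n : ℝ) * (occ * cV) = Cstar * (occ * cV) / (n : ℝ) from by ring,
        div_le_div_iff₀ hnd hn']
      nlinarith [mul_le_mul_of_nonneg_right hcov
        (mul_nonneg (mul_nonneg hpos.le hcVnn) hn'.le)]
    · rw [if_neg hpos]; exact Real.sqrt_nonneg _
  -- telescoping identity and bound on the total variance
  have hend : (∑ s : S, occS P (fun u v a => if a = pistarDet u v then (1:ℝ) else 0) d1 H s *
      (auxM H P R pistarDet H s
        - (valueV H P (rbar R) (fun u v a => if a = pistarDet u v then (1:ℝ) else 0) H s) ^ 2))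
      = 0 := by
    have h1 : ∀ s : S, auxM H P R pistarDet H s = 0 := fun s => by
      rw [auxM, dif_neg (lt_irrefl H)]
    have h2 : ∀ s : S,
        valueV H P (rbar R) (fun u v a => if a = pistarDet u v then (1:ℝ) else 0) H s = 0 :=
      fun s => by rw [valueV, dif_neg (lt_irrefl H)]
    simp [h1, h2]
  have hstep : ∀ t < H,
      (∑ s : S, occS P (fun u v a => if a = pistarDet u v then (1:ℝ) else 0) d1 t s *
        (auxM H P R pistarDet t s
          - (valueV H P (rbar R) (fun u v a => if a = pistarDet u v then (1:ℝ) else 0) t s) ^ 2))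
      = (∑ s : S, occS P (fun u v a => if a = pistarDet u v then (1:ℝ) else 0) d1 t s *
          condVar H P R (fun u v a => if a = pistarDet u v then (1:ℝ) else 0) t s
            (pistarDet t s))
        + ∑ s : S, occS P (fun u v a => if a = pistarDet u v then (1:ℝ) else 0) d1 (t + 1) s *
            (auxM H P R pistarDet (t + 1) s
              - (valueV H P (rbar R) (fun u v a => if a = pistarDet u v then (1:ℝ) else 0)
                  (t + 1) s) ^ 2) := by
    intro t ht
    have hrec : ∀ s' : S,
        occS P (fun u v a => if a = pistarDet u v then (1:ℝ) else 0) d1 (t + 1) s'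
        = ∑ s : S, occS P (fun u v a => if a = pistarDet u v then (1:ℝ) else 0) d1 t s *
            P t s (pistarDet t s) s' := by
      intro s'
      show (∑ s : S, ∑ a : A,
          occS P (fun u v a => if a = pistarDet u v then (1:ℝ) else 0) d1 t s *
            (if a = pistarDet t s then (1:ℝ) else 0) * P t s a s') = _
      refine Finset.sum_congr rfl fun s _ => ?_
      simp [mul_ite, ite_mul, Finset.sum_ite_eq']
    have hpt : ∀ s : S,
        occS P (fun u v a => if a = pistarDet u v then (1:ℝ) else 0) d1 t s *
          (auxM H P R pistarDet t s
            - (valueV H P (rbar R) (fun u v a => if a = pistarDet u v then (1:ℝ) else 0) t s) ^ 2)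
        = occS P (fun u v a => if a = pistarDet u v then (1:ℝ) else 0) d1 t s *
            condVar H P R (fun u v a => if a = pistarDet u v then (1:ℝ) else 0) t s
              (pistarDet t s)
          + occS P (fun u v a => if a = pistarDet u v then (1:ℝ) else 0) d1 t s *
              (∑ s' : S, P t s (pistarDet t s) s' *
                (auxM H P R pistarDet (t + 1) s'
                  - (valueV H P (rbar R) (fun u v a => if a = pistarDet u v then (1:ℝ) else 0)
                      (t + 1) s') ^ 2)) := fun s => by
      rw [aux_W_step H P R pistarDet hP hR ht s]; ring
    have hswap : (∑ s' : S,
        occS P (fun u v a => if a = pistarDet u v then (1:ℝ) else 0) d1 (t + 1) s' *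
          (auxM H P R pistarDet (t + 1) s'
            - (valueV H P (rbar R) (fun u v a => if a = pistarDet u v then (1:ℝ) else 0)
                (t + 1) s') ^ 2))
        = ∑ s : S, occS P (fun u v a => if a = pistarDet u v then (1:ℝ) else 0) d1 t s *
            ∑ s' : S, P t s (pistarDet t s) s' *
              (auxM H P R pistarDet (t + 1) s'
                - (valueV H P (rbar R) (fun u v a => if a = pistarDet u v then (1:ℝ) else 0)
                    (t + 1) s') ^ 2) := by
      rw [Finset.sum_congr rfl fun s' (_ : s' ∈ Finset.univ) => by
        rw [hrec s', Finset.sum_mul]]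
      rw [Finset.sum_comm]
      refine Finset.sum_congr rfl fun s _ => ?_
      rw [Finset.mul_sum]
      exact Finset.sum_congr rfl fun s' _ => by ring
    rw [Finset.sum_congr rfl fun s _ => hpt s, Finset.sum_add_distrib, hswap]
  have htel := aux_telescope H
    (fun t => ∑ s : S, occS P (fun u v a => if a = pistarDet u v then (1:ℝ) else 0) d1 t s *
      (auxM H P R pistarDet t s
        - (valueV H P (rbar R) (fun u v a => if a = pistarDet u v then (1:ℝ) else 0) t s) ^ 2))
    (fun t => ∑ s : S, occS P (fun u v a => if a = pistarDet u v then (1:ℝ) else 0) d1 t s *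
      condVar H P R (fun u v a => if a = pistarDet u v then (1:ℝ) else 0) t s (pistarDet t s))
    hstep hend
  have hF0 : (∑ s : S, occS P (fun u v a => if a = pistarDet u v then (1:ℝ) else 0) d1 0 s *
      (auxM H P R pistarDet 0 s
        - (valueV H P (rbar R) (fun u v a => if a = pistarDet u v then (1:ℝ) else 0) 0 s) ^ 2))
      ≤ (H : ℝ) ^ 2 := by
    have hW0 : ∀ s : S, auxM H P R pistarDet 0 s
        - (valueV H P (rbar R) (fun u v a => if a = pistarDet u v then (1:ℝ) else 0) 0 s) ^ 2
        ≤ (H : ℝ) ^ 2 := by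
      intro s
      have hM := aux_M_le H P R pistarDet hP hR hdp 0 s
      have hV := aux_valueV_bounds H P (rbar R)
        (fun u v a => if a = pistarDet u v then (1:ℝ) else 0) hP hdp hr0 hr1 0 s
      have hcast : ((H - 0 : ℕ) : ℝ) = (H : ℝ) := by norm_num
      rw [hcast] at hM hV
      nlinarith [hV.1, hV.2, hM]
    have hocc0 : ∀ s : S,
        occS P (fun u v a => if a = pistarDet u v then (1:ℝ) else 0) d1 0 s = d1 s :=
      fun s => rfl
    calc (∑ s : S, occS P (fun u v a => if a = pistarDet u v then (1:ℝ) else 0) d1 0 s *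
          (auxM H P R pistarDet 0 s
            - (valueV H P (rbar R) (fun u v a => if a = pistarDet u v then (1:ℝ) else 0) 0 s) ^ 2))
        ≤ ∑ s : S, d1 s * (H : ℝ) ^ 2 := by
          refine Finset.sum_le_sum fun s _ => ?_
          rw [hocc0 s]
          exact mul_le_mul_of_nonneg_left (hW0 s) (hd1.1 s)
      _ = (H : ℝ) ^ 2 := by rw [← Finset.sum_mul, hd1.2, one_mul]
  have hcsum : (∑ t ∈ Finset.range H, ∑ s : S,
      occS P (fun u v a => if a = pistarDet u v then (1:ℝ) else 0) d1 t s *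
        condVar H P R (fun u v a => if a = pistarDet u v then (1:ℝ) else 0) t s (pistarDet t s))
      ≤ (H : ℝ) ^ 2 := le_trans (le_of_eq htel) hF0
  -- Cauchy–Schwarz assembly
  set T := Finset.range H ×ˢ (Finset.univ : Finset S) with hT
  set u : ℕ → S → ℝ := fun t s => Cstar / n *
    (occS P (fun u v a => if a = pistarDet u v then (1:ℝ) else 0) d1 t s *
      condVar H P R (fun u v a => if a = pistarDet u v then (1:ℝ) else 0) t s (pistarDet t s))
    with hu
  have hu_nn : ∀ t (s : S), 0 ≤ u t s := fun t s =>
    mul_nonneg (div_nonneg hCpos.le hn'.le)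
      (mul_nonneg (hoccnn t s) (hcvnn t s (pistarDet t s)))
  have hcs := Finset.sum_mul_sq_le_sq_mul_sq T (fun _ => (1:ℝ))
    (fun p => Real.sqrt (u p.1 p.2))
  have hcard : (∑ _p ∈ T, ((1:ℝ)) ^ 2) = (H : ℝ) * (Fintype.card S : ℝ) := by
    simp [hT, Finset.card_product, mul_comm]
  have hssq : (∑ p ∈ T, Real.sqrt (u p.1 p.2) ^ 2) = ∑ p ∈ T, u p.1 p.2 :=
    Finset.sum_congr rfl fun p _ => Real.sq_sqrt (hu_nn p.1 p.2)
  have hsum_u : (∑ p ∈ T, u p.1 p.2) ≤ Cstar / n * (H : ℝ) ^ 2 := by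
    rw [hT, Finset.sum_product]
    have : (∑ t ∈ Finset.range H, ∑ s : S, u t s)
        = Cstar / n * (∑ t ∈ Finset.range H, ∑ s : S,
          occS P (fun u v a => if a = pistarDet u v then (1:ℝ) else 0) d1 t s *
            condVar H P R (fun u v a => if a = pistarDet u v then (1:ℝ) else 0) t s
              (pistarDet t s)) := by
      rw [Finset.mul_sum]
      exact Finset.sum_congr rfl fun t _ => by rw [Finset.mul_sum]
    rw [this]
    exact mul_le_mul_of_nonneg_left hcsum (div_nonneg hCpos.le hn'.le)
  have hfinal : (∑ p ∈ T, Real.sqrt (u p.1 p.2))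
      ≤ Real.sqrt ((H : ℝ) ^ 3 * (Fintype.card S : ℝ) * Cstar / n) := by
    rw [← Real.sqrt_sq (Finset.sum_nonneg fun p _ => Real.sqrt_nonneg _)]
    apply Real.sqrt_le_sqrt
    calc (∑ p ∈ T, Real.sqrt (u p.1 p.2)) ^ 2
        ≤ (∑ _p ∈ T, ((1:ℝ)) ^ 2) * ∑ p ∈ T, Real.sqrt (u p.1 p.2) ^ 2 := by
          have := hcs; simpa using this
      _ = ((H : ℝ) * (Fintype.card S : ℝ)) * ∑ p ∈ T, u p.1 p.2 := by rw [hcard, hssq]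
      _ ≤ ((H : ℝ) * (Fintype.card S : ℝ)) * (Cstar / n * (H : ℝ) ^ 2) := by
          refine mul_le_mul_of_nonneg_left hsum_u (by positivity)
      _ = (H : ℝ) ^ 3 * (Fintype.card S : ℝ) * Cstar / n := by ring
  calc (∑ t ∈ Finset.range H, ∑ s : S, ∑ a : A,
        (if 0 < occSA P (fun t s a => if a = pistarDet t s then (1:ℝ) else 0) d1 t s a then
          occSA P (fun t s a => if a = pistarDet t s then (1:ℝ) else 0) d1 t s a *
            Real.sqrt (condVar H P R (fun t s a => if a = pistarDet t s then (1:ℝ) else 0)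
              t s a / ((n : ℝ) * occSA P μ d1 t s a))
        else 0))
      ≤ ∑ t ∈ Finset.range H, ∑ s : S, Real.sqrt (u t s) := by
        refine Finset.sum_le_sum fun t ht => Finset.sum_le_sum fun s _ => ?_
        exact hterm t ht s
    _ = ∑ p ∈ T, Real.sqrt (u p.1 p.2) := by rw [hT, Finset.sum_product]
    _ ≤ Real.sqrt ((H : ℝ) ^ 3 * (Fintype.card S : ℝ) * Cstar / n) := hfinal
end
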